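/- Let ν be a probability mass function on 𝒳 with full support, let L be a strongly universal prefix code, and let 0 < λ < D(μ1‖ν). For α ∈ (0,1), define N(α) = inf{ n ≥ 1 : −L(X_1^n) − log ν(X_1^n) − nλ ≥ −log α }, where X_1, X_2, … are i.i.d. with distribution μ1. Then as α → 0, E_{μ1}(N(α)) ~ |log α| / (D(μ1‖ν) − λ), i.e., lim_{α→0} E_{μ1}(N(α)) · (D(μ1‖ν) − λ) / |log α| = 1. -/

import Mathlib

open MeasureTheory Filter
open scoped ENNReal NNReal Topology BigOperators Classical

namespace ChangeDetect

variable {𝒳 : Type} [Fintype 𝒳] [Nonempty 𝒳] [MeasurableSpace 𝒳]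

/-- A probability mass function on `𝒳`. -/
def IsPMF (p : 𝒳 → ℝ) : Prop := (∀ a, 0 ≤ p a) ∧ ∑ a, p a = 1

/-- A probability mass function on `𝒳` with full support. -/
def IsPosPMF (p : 𝒳 → ℝ) : Prop := (∀ a, 0 < p a) ∧ ∑ a, p a = 1

/-- `L` is a family of length functions of fixed-to-variable prefix codes,
i.e. it satisfies Kraft's inequality for each block length `n`. -/
def Kraft (L : (n : ℕ) → (Fin n → 𝒳) → ℕ) : Prop :=
  ∀ n : ℕ, ∑ w : Fin n → 𝒳, (2 : ℝ) ^ (-(L n w : ℝ)) ≤ 1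

/-- i.i.d. (memoryless) probability of a word. -/
noncomputable def wp (p : 𝒳 → ℝ) {n : ℕ} (w : Fin n → 𝒳) : ℝ := ∏ i, p (w i)

/-- Strong universality of the code `L`:
`R_L^n = sup_μ max_w (L(w) + log₂ μ(w)) = o(n)`, the sup over memoryless sources. -/
def StronglyUniversal (L : (n : ℕ) → (Fin n → 𝒳) → ℕ) : Prop :=
  ∃ R : ℕ → ℝ, Tendsto (fun n => R n / n) atTop (𝓝 0) ∧
    ∀ (n : ℕ) (μ : 𝒳 → ℝ), IsPosPMF μ → ∀ w : Fin n → 𝒳,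
      (L n w : ℝ) + Real.logb 2 (wp μ w) ≤ R n

/-- Kullback–Leibler divergence in bits between two pmfs on `𝒳`. -/
noncomputable def D (p q : 𝒳 → ℝ) : ℝ := ∑ a, p a * Real.logb 2 (p a / q a)

/-- The word `x_{s+1}, …, x_{s+n}` of the sequence `x`. -/
def seg (x : ℕ → 𝒳) (s n : ℕ) : Fin n → 𝒳 := fun i => x (s + (i : ℕ))

/-- `P` is the joint law of a sequence of independent observations with `X_{i+1} ∼ ps i`
(characterized by its values on cylinder sets). -/
def IsProductLaw (ps : ℕ → 𝒳 → ℝ) (P : Measure (ℕ → 𝒳)) : Prop :=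
  IsProbabilityMeasure P ∧
    ∀ (n : ℕ) (w : Fin n → 𝒳),
      P {x | ∀ i : Fin n, x (i : ℕ) = w i} = ∏ i : Fin n, ENNReal.ofReal (ps (i : ℕ) (w i))

/-- `P` is the law of an i.i.d. sequence with marginal pmf `p`. -/
def IsIIDLaw (p : 𝒳 → ℝ) (P : Measure (ℕ → 𝒳)) : Prop := IsProductLaw (fun _ => p) P

/-- The one-sided test statistic `−L(x_{s+1}^{s+n}) − log₂ ν(x_{s+1}^{s+n}) − nλ`. -/
noncomputable def stat (L : (n : ℕ) → (Fin n → 𝒳) → ℕ) (ν : 𝒳 → ℝ) (lam : ℝ)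
    (s : ℕ) (x : ℕ → 𝒳) (n : ℕ) : ℝ :=
  -(L n (seg x s n) : ℝ) - Real.logb 2 (wp ν (seg x s n)) - n * lam

/-- The auxiliary stopping time
`N(α) = inf {n ≥ 1 : −L(x_{s+1}^{s+n}) − log₂ ν(x_{s+1}^{s+n}) − nλ ≥ −log₂ α}`
(`⊤` if the set is empty). -/
noncomputable def Naux (L : (n : ℕ) → (Fin n → 𝒳) → ℕ) (ν : 𝒳 → ℝ) (lam α : ℝ)
    (s : ℕ) (x : ℕ → 𝒳) : ℕ∞ :=
  sInf {m : ℕ∞ | ∃ n : ℕ, m = n ∧ 1 ≤ n ∧ -Real.logb 2 α ≤ stat L ν lam s x n}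

/-- The CUSUM statistic `−L(x_{s+k+1}^{s+n}) − log₂ ν(x_{s+k+1}^{s+n}) − nλ`
(here `0 ≤ k < n`, corresponding to the 1-indexed segment `x_{k+1}^{n}` after `s`
training samples). -/
noncomputable def cstat (L : (n : ℕ) → (Fin n → 𝒳) → ℕ) (ν : 𝒳 → ℝ) (lam : ℝ)
    (s : ℕ) (x : ℕ → 𝒳) (k n : ℕ) : ℝ :=
  -(L (n - k) (seg x (s + k) (n - k)) : ℝ)
    - Real.logb 2 (wp ν (seg x (s + k) (n - k))) - n * lam

/-- The CUSUM stopping time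
`M(γ) = inf {n ≥ 1 : max_{1 ≤ k ≤ n} (−L(x_k^n) − log₂ ν(x_k^n) − nλ) ≥ log₂ γ}`. -/
noncomputable def Mstop (L : (n : ℕ) → (Fin n → 𝒳) → ℕ) (ν : 𝒳 → ℝ) (lam γ : ℝ)
    (s : ℕ) (x : ℕ → 𝒳) : ℕ∞ :=
  sInf {m : ℕ∞ | ∃ n : ℕ, m = n ∧ 1 ≤ n ∧ ∃ k < n, Real.logb 2 γ ≤ cstat L ν lam s x k n}

/-- Expectation of an (extended) stopping time. -/
noncomputable def lexp (P : Measure (ℕ → 𝒳)) (N : (ℕ → 𝒳) → ℕ∞) : ℝ≥0∞ :=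
  ∫⁻ x, (N x : ℝ≥0∞) ∂P

/-- The σ-algebra generated by the first `m` coordinates. -/
def firstCoords (𝒳 : Type) [MeasurableSpace 𝒳] (m : ℕ) : MeasurableSpace (ℕ → 𝒳) :=
  MeasurableSpace.comap (fun x => (fun i : Fin m => x (i : ℕ))) inferInstance

/-- An (extended) stopping variable of the observation sequence. -/
def IsSeqStoppingTime (N : (ℕ → 𝒳) → ℕ∞) : Prop :=
  ∀ n : ℕ, MeasurableSet[firstCoords 𝒳 n] {x | N x ≤ (n : ℕ∞)}

/-- Lorden's worst-case expected delay
`Ē₁(N) = sup_{m ≥ 1} ess sup E_m[(N − m + 1)⁺ | X_1, …, X_{m−1}]`,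
where under `P_m` the first `m − 1` observations are i.i.d. with the pre-change law
(the full i.i.d. pre-change law is `P0`) and the observations from time `m` on are
i.i.d. with the post-change law (full i.i.d. law `P1`).  The conditional expectation
given `X_1, …, X_{m−1}` is realized by integrating out the coordinates from `m` on. -/
noncomputable def lordenE1 (P0 P1 : Measure (ℕ → 𝒳)) (N : (ℕ → 𝒳) → ℕ∞) : ℝ≥0∞ :=
  ⨆ m : ℕ, essSup
    (fun x => ∫⁻ y, ((N (fun i => if i < m then x i else y i) : ℝ≥0∞) - m) ∂P1) P0

/-- Empirical distribution of the first `n0` samples of the sequence `x`. -/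
noncomputable def emp (n0 : ℕ) (x : ℕ → 𝒳) (a : 𝒳) : ℝ :=
  ((Finset.range n0).filter (fun i => x i = a)).card / n0

/-- The optimal worst-case delay over all stopping times with `E₀(S) ≥ γ`
(Lorden's class `S_γ`). -/
noncomputable def minDelay (P0 P1 : Measure (ℕ → 𝒳)) (γ : ℝ) : ℝ≥0∞ :=
  sInf {r : ℝ≥0∞ | ∃ N : (ℕ → 𝒳) → ℕ∞, IsSeqStoppingTime N ∧
    ENNReal.ofReal γ ≤ lexp P0 N ∧ r = lordenE1 P0 P1 N}

end ChangeDetect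

/-!
Put `c = -log₂ α`, so that `N(α)` is the first `n ≥ 1` at which the statistic reaches `c`.
Strong universality of `L` gives `stat n ≥ Sₙ - o(n) - nλ`, where `Sₙ = ∑ log₂ (μ1/ν)(Xᵢ)` has
drift `D = D(μ1‖ν)`. A Chernoff bound then makes `P(N > n)` decay geometrically as soon as
`n (D - λ) ≥ (1 + e) c`, whence `E N ≤ (1 + e) c / (D - λ) + O(1)`.

Conversely, for `n ≤ (1 - e) c / (D - λ)` the statistic can reach `c` only if `Sₙ - nλ` exceeds
`(1 - e/2) c`, a large deviation, or if `μ1(X₁ⁿ) ≤ 2^(-e c/2 - L(X₁ⁿ))`, an event of probability at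
most `2^(-e c/2)` by Kraft's inequality. A union bound over these `O(c)` times gives
`P(N < (1 - e) c / (D - λ)) → 0`, whence `E N ≥ (1 - e)² c / (D - λ) - O(1)`.

The σ-algebra on `𝒳` is arbitrary, so neither cylinder sets nor `N(α)` need be measurable:
probabilities are bounded through covers by cylinder sets, expectations through measurable hulls.
-/

open Finset

section Expectation

variable {Ω : Type*} [MeasurableSpace Ω]

theorem ENat.toENNReal_eq_tsum_ite_lt (n : ℕ∞) :
    (n : ℝ≥0∞) = ∑' k : ℕ, if (k : ℕ∞) < n then 1 else 0 := by
  have hind : (fun k : ℕ => if (k : ℕ∞) < n then (1 : ℝ≥0∞) else 0)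
      = {k : ℕ | (k : ℕ∞) < n}.indicator 1 := by
    ext k
    simp [Set.indicator_apply]
  rw [hind, ← _root_.tsum_subtype]
  simp only [Pi.one_apply, ENNReal.tsum_set_one]
  induction n using ENat.recTopCoe with
  | top => simp
  | coe j => simp [Set.Nat.encard_range]

theorem lintegral_enat_le_tsum_measure_lt (P : Measure Ω) (N : Ω → ℕ∞) :
    ∫⁻ x, (N x : ℝ≥0∞) ∂P ≤ ∑' k : ℕ, P {x | (k : ℕ∞) < N x} := by
  choose t hsub hmeas hPt using fun k : ℕ => exists_measurable_superset P {x | (k : ℕ∞) < N x}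
  calc ∫⁻ x, (N x : ℝ≥0∞) ∂P ≤ ∫⁻ x, ∑' k, (t k).indicator 1 x ∂P := by
        refine lintegral_mono fun x => ?_
        rw [ENat.toENNReal_eq_tsum_ite_lt]
        refine ENNReal.tsum_le_tsum fun k => ?_
        split_ifs with h
        · simp [Set.indicator_of_mem (hsub k h)]
        · exact zero_le
    _ = ∑' k : ℕ, P {x | (k : ℕ∞) < N x} := by
        rw [lintegral_tsum fun k => (measurable_one.indicator (hmeas k)).aemeasurable]
        simp_rw [lintegral_indicator_one (hmeas _), hPt]

theorem lintegral_enat_le_of_measure_lt_le_geometric (P : Measure Ω) [IsProbabilityMeasure P]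
    (N : Ω → ℕ∞) (m : ℕ) {ρ : ℝ} (hρ0 : 0 ≤ ρ) (hρ1 : ρ < 1)
    (htail : ∀ k : ℕ, P {x | ((k + m : ℕ) : ℕ∞) < N x} ≤ ENNReal.ofReal (ρ ^ k)) :
    ∫⁻ x, (N x : ℝ≥0∞) ∂P ≤ ENNReal.ofReal (m + (1 - ρ)⁻¹) :=
  calc ∫⁻ x, (N x : ℝ≥0∞) ∂P ≤ ∑' k : ℕ, P {x | (k : ℕ∞) < N x} :=
        lintegral_enat_le_tsum_measure_lt P N
    _ = ∑ k ∈ range m, P {x | (k : ℕ∞) < N x} + ∑' k : ℕ, P {x | ((k + m : ℕ) : ℕ∞) < N x} :=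
        (ENNReal.summable.sum_add_tsum_nat_add').symm
    _ ≤ ∑ _k ∈ range m, 1 + ∑' k : ℕ, ENNReal.ofReal (ρ ^ k) :=
        add_le_add (sum_le_sum fun _ _ => prob_le_one) (ENNReal.tsum_le_tsum htail)
    _ = ENNReal.ofReal (m + (1 - ρ)⁻¹) := by
        rw [← ENNReal.ofReal_tsum_of_nonneg (fun k => pow_nonneg hρ0 k)
          (summable_geometric_of_lt_one hρ0 hρ1), tsum_geometric_of_lt_one hρ0 hρ1,
          ENNReal.ofReal_add (by positivity) (inv_nonneg.mpr (by linarith))]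
        simp

theorem natCast_mul_one_sub_measure_lt_le_lintegral (P : Measure Ω) [IsProbabilityMeasure P]
    (N : Ω → ℕ∞) (m : ℕ) :
    m * (1 - P {x | N x < m}) ≤ ∫⁻ x, (N x : ℝ≥0∞) ∂P := by
  obtain ⟨t, hsub, hmeas, hPt⟩ := exists_measurable_superset P {x | N x < m}
  calc (m : ℝ≥0∞) * (1 - P {x | N x < m}) = ∫⁻ x, tᶜ.indicator (fun _ => (m : ℝ≥0∞)) x ∂P := by
        rw [lintegral_indicator_const hmeas.compl, prob_compl_eq_one_sub hmeas, hPt]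
    _ ≤ ∫⁻ x, (N x : ℝ≥0∞) ∂P := lintegral_mono fun x => by
        by_cases hx : x ∈ t
        · simp [hx]
        · rw [Set.indicator_of_mem hx]
          simpa using ENat.toENNReal_le.mpr (not_lt.mp fun h => hx (hsub h))

end Expectation

theorem tendsto_div_abs_atTop_of_eventually_le {g : ℝ → ℝ}
    (hlow : ∀ e, 0 < e → e ≤ 1 → ∀ᶠ c in atTop, (1 - e) * c ≤ g c)
    (hup : ∀ e, 0 < e → e ≤ 1 → ∀ᶠ c in atTop, g c ≤ (1 + e) * c) :
    Tendsto (fun c => g c / |c|) atTop (𝓝 1) := by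
  rw [Metric.tendsto_nhds]
  intro ε hε
  set e := min ε 1 / 2 with hedef
  have he : 0 < e := by positivity
  have he1 : e ≤ 1 := by linarith [min_le_right ε 1]
  have heε : e < ε := by linarith [min_le_left ε 1]
  filter_upwards [hlow e he he1, hup e he he1, eventually_gt_atTop 0] with c hl hu hc
  rw [abs_of_pos hc, Real.dist_eq, abs_lt, lt_sub_iff_add_lt, sub_lt_iff_lt_add, lt_div_iff₀ hc,
    div_lt_iff₀ hc]
  constructor <;> nlinarith [mul_lt_mul_of_pos_right heε hc]

namespace ChangeDetect

noncomputable def firstPassage (f : ℕ → ℝ) (c : ℝ) : ℕ∞ :=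
  sInf {m : ℕ∞ | ∃ n : ℕ, m = n ∧ 1 ≤ n ∧ c ≤ f n}

theorem firstPassage_le_iff {f : ℕ → ℝ} {c : ℝ} {n : ℕ} :
    firstPassage f c ≤ n ↔ ∃ k, 1 ≤ k ∧ k ≤ n ∧ c ≤ f k := by
  rw [← ENat.lt_add_one_iff (ENat.natCast_ne_top n), firstPassage, sInf_lt_iff]
  constructor
  · rintro ⟨_, ⟨k, rfl, hk1, hck⟩, hkn⟩
    exact ⟨k, hk1, by exact_mod_cast Order.lt_add_one_iff.mp (by exact_mod_cast hkn), hck⟩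
  · rintro ⟨k, hk1, hkn, hck⟩
    exact ⟨k, ⟨k, rfl, hk1, hck⟩, by exact_mod_cast Nat.lt_succ_of_le hkn⟩

theorem measure_firstPassage_le_le {Ω : Type*} [MeasurableSpace Ω] (P : Measure Ω)
    (f : Ω → ℕ → ℝ) (c : ℝ) (m : ℕ) :
    P {x | firstPassage (f x) c ≤ m} ≤ ∑ n ∈ Icc 1 m, P {x | c ≤ f x n} := by
  refine (measure_mono fun x hx => ?_).trans (measure_biUnion_finset_le _ _)
  obtain ⟨k, hk1, hkm, hck⟩ := firstPassage_le_iff.mp hx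
  exact Set.mem_iUnion₂.mpr ⟨k, mem_Icc.mpr ⟨hk1, hkm⟩, hck⟩

section Words

variable {𝒳 : Type}

theorem wp_nonneg {p : 𝒳 → ℝ} (hp : ∀ a, 0 ≤ p a) {n : ℕ} (w : Fin n → 𝒳) : 0 ≤ wp p w :=
  prod_nonneg fun i _ => hp (w i)

variable [Fintype 𝒳]

theorem sum_wp_mul_exp_sum (p z : 𝒳 → ℝ) (t : ℝ) (n : ℕ) :
    ∑ w : Fin n → 𝒳, wp p w * Real.exp (t * ∑ i, z (w i))
      = (∑ a, p a * Real.exp (t * z a)) ^ n := by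
  rw [Fintype.sum_pow]
  refine sum_congr rfl fun w _ => ?_
  rw [wp, mul_sum, Real.exp_sum, ← prod_mul_distrib]

theorem sum_mul_exp_le_exp_sq {p z : 𝒳 → ℝ} (hp : IsPMF p) (hz : ∑ a, p a * z a = 0)
    {B t : ℝ} (hzB : ∀ a, |z a| ≤ B) (ht : 0 ≤ t) (htB : t * B ≤ 1) :
    ∑ a, p a * Real.exp (t * z a) ≤ Real.exp ((t * B) ^ 2) := by
  have hexp : ∀ a, Real.exp (t * z a) ≤ 1 + t * z a + (t * B) ^ 2 := fun a => by
    have htz : |t * z a| ≤ t * B := by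
      rw [abs_mul, abs_of_nonneg ht]
      exact mul_le_mul_of_nonneg_left (hzB a) ht
    have hquad := (abs_le.mp (Real.abs_exp_sub_one_sub_id_le (htz.trans htB))).2
    have hsq : (t * z a) ^ 2 ≤ (t * B) ^ 2 := by
      rw [← sq_abs]
      exact pow_le_pow_left₀ (abs_nonneg _) htz 2
    linarith
  calc ∑ a, p a * Real.exp (t * z a) ≤ ∑ a, p a * (1 + t * z a + (t * B) ^ 2) :=
        sum_le_sum fun a _ => mul_le_mul_of_nonneg_left (hexp a) (hp.1 a)
    _ = 1 + (t * B) ^ 2 := by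
        simp only [mul_add, mul_one, sum_add_distrib, ← sum_mul, hp.2, mul_left_comm _ t,
          ← mul_sum, hz]
        ring
    _ ≤ Real.exp ((t * B) ^ 2) := by linarith [Real.add_one_le_exp ((t * B) ^ 2)]

theorem sum_wp_lt_sum_le_exp {p z : 𝒳 → ℝ} (hp : IsPMF p) (hz : ∑ a, p a * z a = 0)
    {B t : ℝ} (hzB : ∀ a, |z a| ≤ B) (ht : 0 ≤ t) (htB : t * B ≤ 1) (n : ℕ) (u : ℝ) :
    ∑ w : Fin n → 𝒳 with u < ∑ i, z (w i), wp p w ≤ Real.exp (-(t * u) + n * (t * B) ^ 2) := by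
  have hmgf := sum_mul_exp_le_exp_sq hp hz hzB ht htB
  calc ∑ w with u < ∑ i, z (w i), wp p w
        ≤ ∑ w with u < ∑ i, z (w i), wp p w * Real.exp (t * ∑ i, z (w i) - t * u) := by
          refine sum_le_sum fun w hw => le_mul_of_one_le_right (wp_nonneg hp.1 w) ?_
          refine Real.one_le_exp (sub_nonneg.mpr ?_)
          exact mul_le_mul_of_nonneg_left (mem_filter.mp hw).2.le ht
    _ ≤ ∑ w, wp p w * Real.exp (t * ∑ i, z (w i) - t * u) :=
        sum_le_sum_of_subset_of_nonneg (filter_subset _ _) fun w _ _ =>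
          mul_nonneg (wp_nonneg hp.1 w) (Real.exp_pos _).le
    _ = Real.exp (-(t * u)) * (∑ a, p a * Real.exp (t * z a)) ^ n := by
        rw [← sum_wp_mul_exp_sum, mul_sum]
        refine sum_congr rfl fun w _ => ?_
        rw [sub_eq_add_neg, Real.exp_add]
        ring
    _ ≤ Real.exp (-(t * u)) * Real.exp ((t * B) ^ 2) ^ n := by
        gcongr
        exact sum_nonneg fun a _ => mul_nonneg (hp.1 a) (Real.exp_pos _).le
    _ = Real.exp (-(t * u) + n * (t * B) ^ 2) := by rw [← Real.exp_nat_mul, ← Real.exp_add]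

theorem exists_sum_wp_lt_sum_le_exp {p z : 𝒳 → ℝ} (hp : IsPMF p) (hz : ∑ a, p a * z a = 0)
    {θ : ℝ} (hθ : 0 < θ) :
    ∃ κ > 0, ∀ (n : ℕ) (u : ℝ), θ * n ≤ u →
      ∑ w : Fin n → 𝒳 with u < ∑ i, z (w i), wp p w ≤ Real.exp (-(κ * u)) := by
  set B := ∑ a, |z a| + 1
  have hB : 0 < B := by positivity
  have hzB : ∀ a, |z a| ≤ B := fun a =>
    (single_le_sum (fun b _ => abs_nonneg (z b)) (mem_univ a)).trans
      (le_add_of_nonneg_right zero_le_one)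
  set t := min (1 / B) (θ / (2 * B ^ 2))
  have ht : 0 < t := lt_min (by positivity) (by positivity)
  have htB : t * B ≤ 1 := by
    calc t * B ≤ 1 / B * B := mul_le_mul_of_nonneg_right (min_le_left _ _) hB.le
      _ = 1 := by field_simp
  have htB2 : t * B ^ 2 ≤ θ / 2 := by
    calc t * B ^ 2 ≤ θ / (2 * B ^ 2) * B ^ 2 :=
          mul_le_mul_of_nonneg_right (min_le_right _ _) (by positivity)
      _ = θ / 2 := by field_simp
  refine ⟨t / 2, half_pos ht, fun n u hu => (sum_wp_lt_sum_le_exp hp hz hzB ht.le htB n u).trans ?_⟩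
  gcongr
  -- `n (tB)^2 = t n (t B^2) ≤ t (θ n) / 2 ≤ t u / 2`
  nlinarith [mul_le_mul_of_nonneg_left htB2 (mul_nonneg ht.le (Nat.cast_nonneg n : (0:ℝ) ≤ n))]

end Words

section Coding

variable {𝒳 : Type}

noncomputable def llr (p q : 𝒳 → ℝ) (a : 𝒳) : ℝ := Real.logb 2 (p a / q a)

theorem logb_wp_eq_add_sum_llr {p q : 𝒳 → ℝ} (hp : ∀ a, 0 < p a) (hq : ∀ a, 0 < q a) {n : ℕ}
    (w : Fin n → 𝒳) :
    Real.logb 2 (wp p w) = Real.logb 2 (wp q w) + ∑ i, llr p q (w i) := by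
  simp only [wp, llr, Real.logb_prod _ _ fun i _ => (hp (w i)).ne',
    Real.logb_prod _ _ fun i _ => (hq (w i)).ne', Real.logb_div (hp _).ne' (hq _).ne',
    sum_sub_distrib]
  ring

theorem sum_llr_sub_le_stat {L : (n : ℕ) → (Fin n → 𝒳) → ℕ} {μ ν : 𝒳 → ℝ}
    (hμ : ∀ a, 0 < μ a) (hν : ∀ a, 0 < ν a) {n : ℕ} {r : ℝ}
    (hr : ∀ w : Fin n → 𝒳, (L n w : ℝ) + Real.logb 2 (wp μ w) ≤ r) (lam : ℝ) (s : ℕ)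
    (x : ℕ → 𝒳) :
    ∑ i, llr μ ν (seg x s n i) - r - n * lam ≤ stat L ν lam s x n := by
  have := hr (seg x s n)
  rw [logb_wp_eq_add_sum_llr hμ hν] at this
  rw [stat]
  linarith

variable [Fintype 𝒳]

theorem sum_le_two_rpow_of_le_two_rpow_sub_length {L : (n : ℕ) → (Fin n → 𝒳) → ℕ}
    (hL : Kraft L) {n : ℕ} {s : Finset (Fin n → 𝒳)} {q : (Fin n → 𝒳) → ℝ} {b : ℝ}
    (hq : ∀ w ∈ s, q w ≤ 2 ^ (b - L n w)) :
    ∑ w ∈ s, q w ≤ 2 ^ b :=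
  calc ∑ w ∈ s, q w ≤ ∑ w ∈ s, 2 ^ b * (2 : ℝ) ^ (-(L n w : ℝ)) :=
        sum_le_sum fun w hw => (hq w hw).trans_eq (by rw [sub_eq_add_neg, Real.rpow_add two_pos])
    _ ≤ ∑ w, 2 ^ b * (2 : ℝ) ^ (-(L n w : ℝ)) :=
        sum_le_sum_of_subset_of_nonneg (subset_univ _) fun _ _ _ => by positivity
    _ = 2 ^ b * ∑ w, (2 : ℝ) ^ (-(L n w : ℝ)) := (mul_sum _ _ _).symm
    _ ≤ 2 ^ b := mul_le_of_le_one_right (by positivity) (hL n)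

theorem sum_mul_llr_sub_D {p q : 𝒳 → ℝ} (hp : ∑ a, p a = 1) :
    ∑ a, p a * (llr p q a - D p q) = 0 := by
  simp only [mul_sub, sum_sub_distrib, ← sum_mul, hp, one_mul]
  exact sub_eq_zero.mpr rfl

theorem sum_mul_D_sub_llr {p q : 𝒳 → ℝ} (hp : ∑ a, p a = 1) :
    ∑ a, p a * (D p q - llr p q a) = 0 := by
  simp only [mul_sub, sum_sub_distrib, ← sum_mul, hp, one_mul]
  exact sub_eq_zero.mpr rfl

end Coding

section Source

variable {𝒳 : Type} [Fintype 𝒳] [MeasurableSpace 𝒳] {p : 𝒳 → ℝ} {P : Measure (ℕ → 𝒳)}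

theorem IsIIDLaw.measure_le_sum_wp (hP : IsIIDLaw p P) (hp : ∀ a, 0 ≤ p a) (n : ℕ)
    (q : (Fin n → 𝒳) → Prop) :
    P {x | q (seg x 0 n)} ≤ ENNReal.ofReal (∑ w with q w, wp p w) := by
  calc P {x | q (seg x 0 n)} ≤ ∑ w with q w, P {x | ∀ i : Fin n, x i = w i} := by
        refine (measure_mono fun x hx => ?_).trans (measure_biUnion_finset_le _ _)
        exact Set.mem_iUnion₂.mpr ⟨seg x 0 n, mem_filter.mpr ⟨mem_univ _, hx⟩, fun i => by
          simp [seg]⟩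
    _ = ENNReal.ofReal (∑ w with q w, wp p w) := by
        rw [ENNReal.ofReal_sum_of_nonneg fun w _ => wp_nonneg hp w]
        refine sum_congr rfl fun w _ => ?_
        rw [hP.2, wp, ENNReal.ofReal_prod_of_nonneg fun i _ => hp (w i)]

theorem IsIIDLaw.exists_measure_lt_sum_le_exp (hP : IsIIDLaw p P) (hp : IsPMF p) {z : 𝒳 → ℝ}
    (hz : ∑ a, p a * z a = 0) {θ : ℝ} (hθ : 0 < θ) :
    ∃ κ > 0, ∀ (n : ℕ) (u : ℝ), θ * n ≤ u →
      P {x | u < ∑ i, z (seg x 0 n i)} ≤ ENNReal.ofReal (Real.exp (-(κ * u))) := by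
  obtain ⟨κ, hκ, hdev⟩ := exists_sum_wp_lt_sum_le_exp hp hz hθ
  exact ⟨κ, hκ, fun n u hu => (hP.measure_le_sum_wp hp.1 n (fun w => u < ∑ i, z (w i))).trans
    (ENNReal.ofReal_le_ofReal (hdev n u hu))⟩

end Source

section Asymptotics

variable {𝒳 : Type} [Fintype 𝒳] [MeasurableSpace 𝒳] {μ1 ν : 𝒳 → ℝ}
  {L : (n : ℕ) → (Fin n → 𝒳) → ℕ} {lam : ℝ} {P1 : Measure (ℕ → 𝒳)}

/-- Change of measure from `μ1` to `ν`, paid for with Kraft's inequality. -/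
theorem measure_le_stat_le (hP1 : IsIIDLaw μ1 P1) (hμ1 : ∀ a, 0 < μ1 a) (hν : ∀ a, 0 < ν a)
    (hL : Kraft L) (n : ℕ) (c b : ℝ) :
    P1 {x | c ≤ stat L ν lam 0 x n} ≤ ENNReal.ofReal (2 ^ (b - c))
      + P1 {x | b < ∑ i, llr μ1 ν (seg x 0 n i) - n * lam} := by
  set A := {x | c ≤ stat L ν lam 0 x n ∧ ∑ i, llr μ1 ν (seg x 0 n i) - n * lam ≤ b}
  calc P1 {x | c ≤ stat L ν lam 0 x n}
        ≤ P1 (A ∪ {x | b < ∑ i, llr μ1 ν (seg x 0 n i) - n * lam}) :=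
          measure_mono fun x hx => (le_or_gt _ b).imp (fun h => ⟨hx, h⟩) id
    _ ≤ P1 A + P1 {x | b < ∑ i, llr μ1 ν (seg x 0 n i) - n * lam} := measure_union_le _ _
    _ ≤ _ := by
        gcongr
        refine (hP1.measure_le_sum_wp (fun a => (hμ1 a).le) n (fun w =>
          c ≤ -(L n w : ℝ) - Real.logb 2 (wp ν w) - n * lam ∧
            ∑ i, llr μ1 ν (w i) - n * lam ≤ b)).trans (ENNReal.ofReal_le_ofReal
          (sum_le_two_rpow_of_le_two_rpow_sub_length hL fun w hw => ?_))
        simp only [mem_filter, mem_univ, true_and] at hw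
        have hpos : 0 < wp μ1 w := prod_pos fun i _ => hμ1 (w i)
        rw [← Real.rpow_logb two_pos (by norm_num) hpos]
        gcongr
        · norm_num
        · rw [logb_wp_eq_add_sum_llr hμ1 hν]
          linarith [hw.1, hw.2]

theorem measure_lt_firstPassage_le (hμ1 : ∀ a, 0 < μ1 a) (hν : ∀ a, 0 < ν a) {n : ℕ}
    (hn : 1 ≤ n) {r : ℝ} (hr : ∀ w : Fin n → 𝒳, (L n w : ℝ) + Real.logb 2 (wp μ1 w) ≤ r)
    {c θ : ℝ} (hcθ : c + r + θ * n ≤ n * (D μ1 ν - lam)) :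
    P1 {x | (n : ℕ∞) < firstPassage (stat L ν lam 0 x) c}
      ≤ P1 {x | θ * n < ∑ i, (D μ1 ν - llr μ1 ν (seg x 0 n i))} := by
  refine measure_mono fun x hx => ?_
  have hstat : stat L ν lam 0 x n < c := by
    by_contra! h
    exact (lt_iff_not_ge.mp hx) (firstPassage_le_iff.mpr ⟨n, hn, le_rfl, h⟩)
  have hlow := sum_llr_sub_le_stat hμ1 hν hr lam 0 x
  show θ * n < ∑ i, (D μ1 ν - llr μ1 ν (seg x 0 n i))
  simp only [sum_sub_distrib, sum_const, card_univ, Fintype.card_fin, nsmul_eq_mul]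
  linarith

theorem exists_lexp_firstPassage_le (hP1 : IsIIDLaw μ1 P1) (hμ1 : IsPosPMF μ1)
    (hν : ∀ a, 0 < ν a) (hU : StronglyUniversal L) (hlam : lam < D μ1 ν) {e : ℝ} (he : 0 < e)
    (he1 : e ≤ 1) :
    ∃ C, ∀ c ≥ 0, lexp P1 (fun x => firstPassage (stat L ν lam 0 x) c)
      ≤ ENNReal.ofReal (C + (1 + e) * c / (D μ1 ν - lam)) := by
  have := hP1.1
  obtain ⟨R, hR0, hR⟩ := hU
  set δ := D μ1 ν - lam
  have hδ : 0 < δ := sub_pos.mpr hlam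
  set θ := e * δ / 4 with hθdef
  have hθ : 0 < θ := by positivity
  obtain ⟨κ, hκ, hdev⟩ := hP1.exists_measure_lt_sum_le_exp ⟨fun a => (hμ1.1 a).le, hμ1.2⟩
    (sum_mul_D_sub_llr (q := ν) hμ1.2) hθ
  obtain ⟨n₀, hn₀, hRn⟩ : ∃ n₀ : ℕ, 1 ≤ n₀ ∧ ∀ n ≥ n₀, R n ≤ θ * n := by
    obtain ⟨n₀, h⟩ := eventually_atTop.mp (hR0.eventually (gt_mem_nhds hθ))
    refine ⟨max n₀ 1, le_max_right _ _, fun n hn => ?_⟩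
    have hn' : (0 : ℝ) < n := by exact_mod_cast (le_max_right n₀ 1).trans hn
    exact ((div_lt_iff₀ hn').mp (h n ((le_max_left _ _).trans hn))).le
  set ρ := Real.exp (-(κ * θ))
  have hρ1 : ρ < 1 := Real.exp_lt_one_iff.mpr (by nlinarith)
  refine ⟨n₀ + 1 + (1 - ρ)⁻¹, fun c hc => ?_⟩
  set m := n₀ + ⌈(1 + e) * c / δ⌉₊
  have htail (k : ℕ) : P1 {x | ((k + m : ℕ) : ℕ∞) < firstPassage (stat L ν lam 0 x) c}
      ≤ ENNReal.ofReal (ρ ^ k) := by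
    set n := k + m
    have hcn : (1 + e) * c ≤ n * δ := by
      rw [← div_le_iff₀ hδ]
      exact (Nat.le_ceil _).trans (by exact_mod_cast (by omega : ⌈(1 + e) * c / δ⌉₊ ≤ n))
    have hkn : (k : ℝ) ≤ n := by exact_mod_cast (by omega : k ≤ n)
    have hRθ := hRn n (by omega)
    -- `(1 + e) c ≤ n δ` leaves room `n δ - c ≥ e n δ / 2 = 2 θ n`
    have hroom : c + R n + θ * n ≤ n * δ := by
      nlinarith [mul_le_mul_of_nonneg_right hcn (by linarith : (0 : ℝ) ≤ 1 - e / 2),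
        mul_nonneg (mul_nonneg he.le (by linarith : (0 : ℝ) ≤ 1 - e)) hc]
    calc P1 {x | (n : ℕ∞) < firstPassage (stat L ν lam 0 x) c}
        ≤ P1 {x | θ * n < ∑ i, (D μ1 ν - llr μ1 ν (seg x 0 n i))} :=
          measure_lt_firstPassage_le hμ1.1 hν (by omega) (hR n μ1 hμ1) hroom
      _ ≤ ENNReal.ofReal (Real.exp (-(κ * (θ * n)))) := hdev n _ le_rfl
      _ ≤ ENNReal.ofReal (ρ ^ k) := by
          rw [← Real.exp_nat_mul]
          refine ENNReal.ofReal_le_ofReal (Real.exp_le_exp.mpr ?_)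
          nlinarith [mul_le_mul_of_nonneg_left hkn (mul_pos hκ hθ).le]
  refine (lintegral_enat_le_of_measure_lt_le_geometric P1 _ m (Real.exp_pos _).le hρ1
    htail).trans (ENNReal.ofReal_le_ofReal ?_)
  have := Nat.ceil_lt_add_one (by positivity : 0 ≤ (1 + e) * c / δ)
  push_cast [m]
  linarith

theorem exists_measure_firstPassage_le_le (hP1 : IsIIDLaw μ1 P1) (hμ1 : IsPosPMF μ1)
    (hν : ∀ a, 0 < ν a) (hL : Kraft L) (hlam : lam < D μ1 ν) {e : ℝ} (he : 0 < e) :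
    ∃ κ > 0, ∀ c ≥ 0, ∀ m : ℕ, m * (D μ1 ν - lam) ≤ (1 - e) * c →
      P1 {x | firstPassage (stat L ν lam 0 x) c ≤ m}
        ≤ ENNReal.ofReal (2 * m * Real.exp (-κ * c)) := by
  set δ := D μ1 ν - lam with hδdef
  have hδ : 0 < δ := sub_pos.mpr hlam
  obtain ⟨κ, hκ, hdev⟩ := hP1.exists_measure_lt_sum_le_exp ⟨fun a => (hμ1.1 a).le, hμ1.2⟩
    (sum_mul_llr_sub_D (q := ν) hμ1.2) (θ := e * δ / 2) (by positivity)
  set κ' := min (e / 2 * Real.log 2) (κ * (e / 2))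
  have hκ' : 0 < κ' := lt_min (by positivity) (by positivity)
  refine ⟨κ', hκ', fun c hc m hm => ?_⟩
  -- split at `Sₙ - nλ = (1 - e/2) c`: below it Kraft's inequality, above it a deviation `≥ e c/2`
  have hterm (n : ℕ) (hn : n ∈ Icc 1 m) :
      P1 {x | c ≤ stat L ν lam 0 x n} ≤ ENNReal.ofReal (2 * Real.exp (-κ' * c)) := by
    have hnm : n * δ ≤ (1 - e) * c := (mul_le_mul_of_nonneg_right
      (by exact_mod_cast (mem_Icc.mp hn).2) hδ.le).trans hm
    refine (measure_le_stat_le hP1 hμ1.1 hν hL n c ((1 - e / 2) * c)).trans ?_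
    rw [two_mul, ENNReal.ofReal_add (Real.exp_pos _).le (Real.exp_pos _).le]
    gcongr ?_ + ?_
    · rw [Real.rpow_def_of_pos two_pos]
      refine ENNReal.ofReal_le_ofReal (Real.exp_le_exp.mpr ?_)
      nlinarith [mul_le_mul_of_nonneg_right (min_le_left (e / 2 * Real.log 2) (κ * (e / 2))) hc]
    · refine (measure_mono fun x hx => ?_).trans ((hdev n (e / 2 * c) ?_).trans
        (ENNReal.ofReal_le_ofReal (Real.exp_le_exp.mpr ?_)))
      · show e / 2 * c < ∑ i, (llr μ1 ν (seg x 0 n i) - D μ1 ν)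
        have hx : (1 - e / 2) * c < ∑ i, llr μ1 ν (seg x 0 n i) - n * lam := hx
        simp only [sum_sub_distrib, sum_const, card_univ, Fintype.card_fin, nsmul_eq_mul]
        linarith
      · nlinarith [mul_le_mul_of_nonneg_left hnm (by positivity : (0 : ℝ) ≤ e / 2),
          mul_nonneg (mul_nonneg he.le he.le) hc]
      · nlinarith [mul_le_mul_of_nonneg_right (min_le_right
          (e / 2 * Real.log 2) (κ * (e / 2))) hc]
  calc P1 {x | firstPassage (stat L ν lam 0 x) c ≤ m}
      ≤ ∑ n ∈ Icc 1 m, P1 {x | c ≤ stat L ν lam 0 x n} :=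
        measure_firstPassage_le_le P1 (fun x => stat L ν lam 0 x) c m
    _ ≤ ∑ _n ∈ Icc 1 m, ENNReal.ofReal (2 * Real.exp (-κ' * c)) := sum_le_sum hterm
    _ = ENNReal.ofReal (2 * m * Real.exp (-κ' * c)) := by
        rw [sum_const, Nat.card_Icc, Nat.add_sub_cancel, nsmul_eq_mul, ← ENNReal.ofReal_natCast,
          ← ENNReal.ofReal_mul (Nat.cast_nonneg _)]
        ring_nf

theorem eventually_lexp_firstPassage_le (hP1 : IsIIDLaw μ1 P1) (hμ1 : IsPosPMF μ1)
    (hν : ∀ a, 0 < ν a) (hU : StronglyUniversal L) (hlam : lam < D μ1 ν) {e : ℝ} (he : 0 < e)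
    (he1 : e ≤ 1) :
    ∀ᶠ c in atTop, lexp P1 (fun x => firstPassage (stat L ν lam 0 x) c)
      ≤ ENNReal.ofReal ((1 + e) * c / (D μ1 ν - lam)) := by
  have hδ : 0 < D μ1 ν - lam := sub_pos.mpr hlam
  obtain ⟨C, hC⟩ := exists_lexp_firstPassage_le hP1 hμ1 hν hU hlam (e := e / 2) (by positivity)
    (by linarith)
  filter_upwards [eventually_ge_atTop (2 * C * (D μ1 ν - lam) / e), eventually_ge_atTop 0]
    with c hcC hc
  refine (hC c hc).trans (ENNReal.ofReal_le_ofReal ?_)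
  rw [div_le_iff₀ he] at hcC
  have hgap : (1 + e) * c / (D μ1 ν - lam) - (C + (1 + e / 2) * c / (D μ1 ν - lam))
      = (e * c / 2 - C * (D μ1 ν - lam)) / (D μ1 ν - lam) := by
    field_simp
    ring
  linarith [div_nonneg (by linarith : 0 ≤ e * c / 2 - C * (D μ1 ν - lam)) hδ.le]

theorem eventually_le_lexp_firstPassage (hP1 : IsIIDLaw μ1 P1) (hμ1 : IsPosPMF μ1)
    (hν : ∀ a, 0 < ν a) (hL : Kraft L) (hlam : lam < D μ1 ν) {e : ℝ} (he : 0 < e)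
    (he1 : e ≤ 1) :
    ∀ᶠ c in atTop, ENNReal.ofReal ((1 - e) * c / (D μ1 ν - lam))
      ≤ lexp P1 (fun x => firstPassage (stat L ν lam 0 x) c) := by
  have := hP1.1
  set δ := D μ1 ν - lam
  have hδ : 0 < δ := sub_pos.mpr hlam
  obtain ⟨κ, hκ, hP⟩ := exists_measure_firstPassage_le_le hP1 hμ1 hν hL hlam (e := e / 3)
    (by positivity)
  have hsmall : ∀ᶠ c in atTop, 2 / δ * (c * Real.exp (-κ * c)) < e / 3 := by
    have h := (tendsto_rpow_mul_exp_neg_mul_atTop_nhds_zero 1 κ hκ).const_mul (2 / δ)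
    simp only [Real.rpow_one, mul_zero] at h
    exact h.eventually (gt_mem_nhds (by positivity))
  filter_upwards [hsmall, eventually_ge_atTop (3 * δ / e)] with c hsmall hc
  rw [div_le_iff₀ he] at hc
  have hc0 : 0 ≤ c := by nlinarith
  set m := ⌊(1 - e / 3) * c / δ⌋₊
  have hmδ : m * δ ≤ (1 - e / 3) * c :=
    (le_div_iff₀ hδ).mp (Nat.floor_le (div_nonneg (by nlinarith) hδ.le))
  have hm : (1 - e / 3) * c / δ < m + 1 := Nat.lt_floor_add_one _
  have hPm : P1 {x | firstPassage (stat L ν lam 0 x) c < m} ≤ ENNReal.ofReal (e / 3) := by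
    calc P1 {x | firstPassage (stat L ν lam 0 x) c < m}
        ≤ P1 {x | firstPassage (stat L ν lam 0 x) c ≤ m} :=
          measure_mono (Set.ofPred_subset_ofPred.mpr fun _ => le_of_lt)
      _ ≤ ENNReal.ofReal (2 * m * Real.exp (-κ * c)) := hP c hc0 m hmδ
      _ ≤ ENNReal.ofReal (e / 3) := by
          refine ENNReal.ofReal_le_ofReal (le_of_lt (lt_of_le_of_lt ?_ hsmall))
          calc 2 * m * Real.exp (-κ * c) = 2 / δ * (m * δ * Real.exp (-κ * c)) := by
                field_simp
            _ ≤ 2 / δ * (c * Real.exp (-κ * c)) := by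
                gcongr
                nlinarith
  calc ENNReal.ofReal ((1 - e) * c / δ) ≤ ENNReal.ofReal (m * (1 - e / 3)) := by
        refine ENNReal.ofReal_le_ofReal ?_
        rw [div_lt_iff₀ hδ] at hm
        rw [div_le_iff₀ hδ]
        nlinarith [mul_le_mul_of_nonneg_right hm.le (by linarith : (0 : ℝ) ≤ 1 - e / 3)]
    _ = m * (1 - ENNReal.ofReal (e / 3)) := by
        rw [ENNReal.ofReal_mul (Nat.cast_nonneg _), ENNReal.ofReal_natCast,
          ENNReal.ofReal_sub _ (by positivity), ENNReal.ofReal_one]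
    _ ≤ m * (1 - P1 {x | firstPassage (stat L ν lam 0 x) c < m}) := by gcongr
    _ ≤ lexp P1 (fun x => firstPassage (stat L ν lam 0 x) c) :=
        natCast_mul_one_sub_measure_lt_le_lintegral P1 _ m

theorem tendsto_lexp_firstPassage_mul_div_abs (hP1 : IsIIDLaw μ1 P1) (hμ1 : IsPosPMF μ1)
    (hν : ∀ a, 0 < ν a) (hL : Kraft L) (hU : StronglyUniversal L) (hlam : lam < D μ1 ν) :
    Tendsto (fun c => (lexp P1 (fun x => firstPassage (stat L ν lam 0 x) c)).toReal
      * (D μ1 ν - lam) / |c|) atTop (𝓝 1) := by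
  have hδ : 0 < D μ1 ν - lam := sub_pos.mpr hlam
  refine tendsto_div_abs_atTop_of_eventually_le (fun e he he1 => ?_) (fun e he he1 => ?_)
  · filter_upwards [eventually_le_lexp_firstPassage hP1 hμ1 hν hL hlam he he1,
      eventually_lexp_firstPassage_le hP1 hμ1 hν hU hlam one_pos le_rfl] with c hlow hup
    rw [← div_le_iff₀ hδ]
    exact (ENNReal.ofReal_le_iff_le_toReal (ne_top_of_le_ne_top ENNReal.ofReal_ne_top hup)).mp hlow
  · filter_upwards [eventually_lexp_firstPassage_le hP1 hμ1 hν hU hlam he he1,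
      eventually_ge_atTop 0] with c hup hc
    rw [← le_div_iff₀ hδ]
    exact ENNReal.toReal_le_of_le_ofReal (by positivity) hup

end Asymptotics

theorem stmt7_general {𝒳 : Type} [Fintype 𝒳] [MeasurableSpace 𝒳]
    (μ1 ν : 𝒳 → ℝ) (hμ1 : IsPosPMF μ1) (hν : IsPosPMF ν)
    (L : (n : ℕ) → (Fin n → 𝒳) → ℕ) (hL : Kraft L) (hU : StronglyUniversal L)
    (lam : ℝ) (hlam1 : lam < D μ1 ν)
    (P1 : Measure (ℕ → 𝒳)) (hP1 : IsIIDLaw μ1 P1) :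
    Tendsto (fun α : ℝ =>
        (lexp P1 (Naux L ν lam α 0)).toReal * (D μ1 ν - lam) / |Real.logb 2 α|)
      (𝓝[>] 0) (𝓝 1) := by
  have hthreshold : Tendsto (fun α : ℝ => -Real.logb 2 α) (𝓝[>] 0) atTop :=
    tendsto_neg_atBot_atTop.comp (Real.tendsto_logb_nhdsGT_zero one_lt_two)
  refine ((tendsto_lexp_firstPassage_mul_div_abs hP1 hμ1 hν.1 hL hU hlam1).comp
    hthreshold).congr fun α => ?_
  simp only [Function.comp_apply, abs_neg]
  rfl

/-- asymptotics of the expected stopping time under the post-change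
source: `E_{μ1}(N(α)) ~ |log α| / (D(μ1‖ν) − λ)` as `α → 0`. -/
theorem stmt7 {𝒳 : Type} [Fintype 𝒳] [Nonempty 𝒳] [MeasurableSpace 𝒳]
    (μ1 ν : 𝒳 → ℝ) (hμ1 : IsPosPMF μ1) (hν : IsPosPMF ν)
    (L : (n : ℕ) → (Fin n → 𝒳) → ℕ) (hL : Kraft L) (hU : StronglyUniversal L)
    (lam : ℝ) (hlam0 : 0 < lam) (hlam1 : lam < D μ1 ν)
    (P1 : Measure (ℕ → 𝒳)) (hP1 : IsIIDLaw μ1 P1) :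
    Tendsto (fun α : ℝ =>
        (lexp P1 (Naux L ν lam α 0)).toReal * (D μ1 ν - lam) / |Real.logb 2 α|)
      (𝓝[>] 0) (𝓝 1) :=
  stmt7_general μ1 ν hμ1 hν L hL hU lam hlam1 P1 hP1

end ChangeDetect
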